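/- Let f : ℝ⁴ → ℝ and h^k : ℝ⁴ → ℝ (k ∈ {4,…,9}) be differentiable with f(x) ≠ 0 for all x and with the normalization f(x)² + Σ_{k=4}^{9} (h^k(x))² = 1 for all x. Define ψ(x) := f(x)·1 + Σ_{k=4}^{9} h^k(x)·e₁ e_k, H_α^{1k} := 2f²·∂_α( h^k / f ), and A_α^{ij} := (1/f)·( H_α^{1i}·h^j − H_α^{1j}·h^i ) for i,j ∈ {4,…,9}. Then reverse(ψ)·ψ = 1 everywhere, and ψ satisfies the Killing spin field equation with these coefficients and all other coefficients zero; that is, for every α ∈ {0,1,2,3}: ∂_αψ = ( (1/2)·Σ_{k=4}^{9} H_α^{1k}·e₁ e_k + (1/4)·Σ_{i,j=4}^{9} A_α^{ij}·e_i e_j )·ψ. In particular the tangential connection coefficients vanish (ω_α^{μν} = 0). -/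

import Mathlib

open CliffordAlgebra

noncomputable section

/-- The Minkowski signs `(-1,1,…,1)` on `ℝ^{10}`. -/
def ηv : Fin 10 → ℝ := fun I => if I = 0 then -1 else 1

/-- The Minkowski metric `η = diag(-1,1,…,1)` as a matrix. -/
def ηm : Fin 10 → Fin 10 → ℝ := fun I J => if I = J then ηv I else 0

/-- The Minkowski quadratic form `Q(x) = -x₀² + x₁² + ⋯ + x₉²` on `ℝ^{10}`. -/
def Qm : QuadraticForm ℝ (Fin 10 → ℝ) := QuadraticMap.weightedSumSquares ℝ ηv

/-- The Clifford algebra of the Minkowski form on `ℝ^{10}`. -/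
abbrev Cl := CliffordAlgebra Qm

/-- The images `e_I` of the standard basis vectors of `ℝ^{10}` in `Cl`. -/
def e (I : Fin 10) : Cl := ι Qm (Pi.single I 1)

/-- Inclusion of tangent indices `{0,…,3}` into `{0,…,9}`. -/
def tIdx (μ : Fin 4) : Fin 10 := ⟨μ.1, by omega⟩

/-- Inclusion of normal indices `{4,…,9}` into `{0,…,9}`. -/
def nIdx (i : Fin 6) : Fin 10 := ⟨i.1 + 4, by omega⟩

/-- The spin field `ψ = f·1 + Σ_k h^k·e₁e_k` (`k` ranging over the normal indices). -/
def ψB (f : (Fin 4 → ℝ) → ℝ) (h : Fin 6 → (Fin 4 → ℝ) → ℝ) (x : Fin 4 → ℝ) : Cl :=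
  f x • (1 : Cl) + ∑ k : Fin 6, h k x • (e 1 * e (nIdx k))

/-- The extrinsic curvature `H_α^{1k} = 2f²·∂_α(h^k/f)`. -/
def HB (f : (Fin 4 → ℝ) → ℝ) (h : Fin 6 → (Fin 4 → ℝ) → ℝ)
    (α : Fin 4) (k : Fin 6) (x : Fin 4 → ℝ) : ℝ :=
  2 * (f x) ^ 2 * fderiv ℝ (fun y => h k y / f y) x (Pi.single α 1)

/-- The normal connection `A_α^{ij} = (1/f)·(H_α^{1i}h^j − H_α^{1j}h^i)`. -/
def AB (f : (Fin 4 → ℝ) → ℝ) (h : Fin 6 → (Fin 4 → ℝ) → ℝ)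
    (α : Fin 4) (i j : Fin 6) (x : Fin 4 → ℝ) : ℝ :=
  (1 / f x) * (HB f h α i x * h j x - HB f h α j x * h i x)

/-! Write `ψ = f + e₁V` with `V = ι(Σₖ hᵏ b_{k+4})`. Since `e₁² = 1`, `e₁` anticommutes with
every normal vector and `V² = Σₖ (hᵏ)² = 1 - f²`, we get `reverse ψ = f - e₁V` and
`reverse ψ * ψ = f² + V² = 1`. Hence `∂ψ = (∂ψ · reverse ψ) ψ`, and with `W = ∂V`,
`∂ψ · reverse ψ = (f' + e₁W)(f - e₁V) = f e₁W - f' e₁V + WV + f f'`. Differentiating the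
normalization gives `WV + VW = -2 f f'`, so this is `f e₁W - f' e₁V + ½(WV - VW)`, which is the
stated combination of `H` and `A` since `H^{1k} = 2(f ∂hᵏ - hᵏ ∂f)` and
`A^{ij} = 2(∂hⁱ hʲ - hⁱ ∂hʲ)`. -/

section AnticommutingElements

variable {A : Type*} [Ring A] {E V W : A}

lemma mul_mul_mul_eq_neg_of_anticomm (hE : E * E = 1) (hW : E * W + W * E = 0) :
    E * W * (E * V) = -(W * V) := by
  have hWE : W * E = -(E * W) := eq_neg_of_add_eq_zero_right hW
  rw [mul_assoc, ← mul_assoc W, hWE, neg_mul, mul_neg, ← mul_assoc, ← mul_assoc, hE, one_mul]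

variable [Algebra ℝ A]

lemma smul_one_sub_mul_mul_smul_one_add_mul {F : ℝ} (hE : E * E = 1) (hV : E * V + V * E = 0)
    (hVV : V * V = algebraMap ℝ A (1 - F ^ 2)) :
    (F • 1 - E * V) * (F • 1 + E * V) = 1 := by
  have h := mul_mul_mul_eq_neg_of_anticomm (V := V) hE hV
  rw [hVV, Algebra.algebraMap_eq_smul_one] at h
  simp only [sub_mul, mul_add, one_mul, mul_one, smul_mul_assoc, mul_smul_comm, h]
  rw [← one_smul ℝ (1 : A)]
  match_scalars <;> ring

lemma smul_one_add_mul_mul_smul_one_sub_mul {F F' : ℝ} (hE : E * E = 1)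
    (hW : E * W + W * E = 0) (hWV : W * V + V * W = algebraMap ℝ A (-(2 * F * F'))) :
    (F' • 1 + E * W) * (F • 1 - E * V) =
      F • (E * W) - F' • (E * V) + (2⁻¹ : ℝ) • (W * V - V * W) := by
  have hVW : V * W = -(2 * F * F') • 1 - W * V := by
    rw [← Algebra.algebraMap_eq_smul_one, ← hWV]; abel
  simp only [mul_sub, add_mul, one_mul, mul_one, smul_mul_assoc, mul_smul_comm,
    mul_mul_mul_eq_neg_of_anticomm hE hW, hVW]
  match_scalars <;> ring

lemma smul_one_add_mul_eq_mul_smul_one_add_mul {F F' : ℝ} (hE : E * E = 1)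
    (hV : E * V + V * E = 0) (hW : E * W + W * E = 0)
    (hVV : V * V = algebraMap ℝ A (1 - F ^ 2))
    (hWV : W * V + V * W = algebraMap ℝ A (-(2 * F * F'))) :
    F' • 1 + E * W =
      (F • (E * W) - F' • (E * V) + (2⁻¹ : ℝ) • (W * V - V * W)) * (F • 1 + E * V) := by
  rw [← smul_one_add_mul_mul_smul_one_sub_mul hE hW hWV, mul_assoc,
    smul_one_sub_mul_mul_smul_one_add_mul hE hV hVV, mul_one]

end AnticommutingElements

lemma polar_Qm (x y : Fin 10 → ℝ) :
    QuadraticMap.polar Qm x y = 2 * ∑ I, ηv I * (x I * y I) := by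
  simp only [QuadraticMap.polar, Qm, QuadraticMap.weightedSumSquares_apply, smul_eq_mul,
    Pi.add_apply, ← Finset.sum_sub_distrib, Finset.mul_sum]
  exact Finset.sum_congr rfl fun I _ => by ring

def normalVec : (Fin 6 → ℝ) →ₗ[ℝ] Fin 10 → ℝ :=
  Fintype.linearCombination ℝ fun k => Pi.single (nIdx k) 1

lemma nIdx_eq_natAdd (k : Fin 6) : nIdx k = Fin.natAdd 4 k := by
  ext; simp [nIdx, add_comm]

lemma normalVec_natAdd (c : Fin 6 → ℝ) (k : Fin 6) : normalVec c (Fin.natAdd 4 k) = c k := by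
  rw [normalVec, Fintype.linearCombination_apply, Finset.sum_apply, Finset.sum_eq_single k]
  · simp [nIdx_eq_natAdd]
  · intro j _ hjk
    simp [nIdx_eq_natAdd, Fin.ext_iff, Fin.val_ne_iff.mpr hjk]
  · simp

lemma normalVec_castAdd (c : Fin 6 → ℝ) (μ : Fin 4) : normalVec c (Fin.castAdd 6 μ) = 0 := by
  simp only [normalVec, Fintype.linearCombination_apply, nIdx_eq_natAdd, Finset.sum_apply,
    Pi.smul_apply, Pi.single_apply, smul_eq_mul, Fin.ext_iff, Fin.val_castAdd, Fin.val_natAdd]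
  exact Finset.sum_eq_zero fun k _ => by rw [if_neg (by omega), mul_zero]

lemma ηv_natAdd (k : Fin 6) : ηv (Fin.natAdd 4 k) = 1 :=
  if_neg (by fin_cases k <;> decide)

lemma polar_normalVec (a b : Fin 6 → ℝ) :
    QuadraticMap.polar Qm (normalVec a) (normalVec b) = 2 * ∑ k, a k * b k := by
  simp [polar_Qm, Fin.sum_univ_add (a := 4) (b := 6), normalVec_natAdd, normalVec_castAdd,
    ηv_natAdd]

lemma Qm_normalVec (c : Fin 6 → ℝ) : Qm (normalVec c) = ∑ k, c k ^ 2 := by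
  have h := polar_normalVec c c
  rw [QuadraticMap.polar_self, nsmul_eq_mul] at h
  simpa [sq] using h

lemma polar_single_one_normalVec (b : Fin 6 → ℝ) :
    QuadraticMap.polar Qm (Pi.single 1 1) (normalVec b) = 0 := by
  simpa [polar_Qm, Pi.single_apply] using Or.inr (normalVec_castAdd b 1)

lemma ι_normalVec (c : Fin 6 → ℝ) : ι Qm (normalVec c) = ∑ k, c k • e (nIdx k) := by
  simp [normalVec, Fintype.linearCombination_apply, e, map_sum, map_smul]

lemma e_one_mul_ι_normalVec (c : Fin 6 → ℝ) :
    e 1 * ι Qm (normalVec c) = ∑ k, c k • (e 1 * e (nIdx k)) := by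
  simp only [ι_normalVec, Finset.mul_sum, mul_smul_comm]

lemma ι_normalVec_mul_ι_normalVec (a b : Fin 6 → ℝ) :
    ι Qm (normalVec a) * ι Qm (normalVec b) =
      ∑ i, ∑ j, (a i * b j) • (e (nIdx i) * e (nIdx j)) := by
  simp only [ι_normalVec, Finset.sum_mul_sum, smul_mul_smul]

lemma e_one_mul_self : e 1 * e 1 = 1 := by
  have hQ : Qm (Pi.single 1 1) = 1 := by
    simp [Qm, QuadraticMap.weightedSumSquares_apply, Pi.single_apply, ηv]
  rw [e, ι_sq_scalar, hQ, map_one]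

lemma e_one_anticomm_ι_normalVec (c : Fin 6 → ℝ) :
    e 1 * ι Qm (normalVec c) + ι Qm (normalVec c) * e 1 = 0 := by
  rw [e, ι_mul_ι_add_swap, polar_single_one_normalVec, map_zero]

lemma ι_normalVec_anticomm (a b : Fin 6 → ℝ) :
    ι Qm (normalVec a) * ι Qm (normalVec b) + ι Qm (normalVec b) * ι Qm (normalVec a) =
      algebraMap ℝ Cl (2 * ∑ k, a k * b k) := by
  rw [ι_mul_ι_add_swap, polar_normalVec]

lemma ι_normalVec_mul_self (c : Fin 6 → ℝ) :
    ι Qm (normalVec c) * ι Qm (normalVec c) = algebraMap ℝ Cl (∑ k, c k ^ 2) := by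
  rw [ι_sq_scalar, Qm_normalVec]

lemma ι_normalVec_mul_self_eq_one_sub_sq {a : ℝ} {c : Fin 6 → ℝ}
    (hc : a ^ 2 + ∑ k, c k ^ 2 = 1) :
    ι Qm (normalVec c) * ι Qm (normalVec c) = algebraMap ℝ Cl (1 - a ^ 2) := by
  rw [ι_normalVec_mul_self, ← hc, add_sub_cancel_left]

lemma ψB_eq (f : (Fin 4 → ℝ) → ℝ) (h : Fin 6 → (Fin 4 → ℝ) → ℝ) (x : Fin 4 → ℝ) :
    ψB f h x = f x • 1 + e 1 * ι Qm (normalVec fun k => h k x) := by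
  rw [ψB, e_one_mul_ι_normalVec]

lemma reverse_ψB (f : (Fin 4 → ℝ) → ℝ) (h : Fin 6 → (Fin 4 → ℝ) → ℝ) (x : Fin 4 → ℝ) :
    reverse (ψB f h x) = f x • 1 - e 1 * ι Qm (normalVec fun k => h k x) := by
  have hrev_e : reverse (e 1) = e 1 := reverse_ι _
  rw [ψB_eq, map_add, map_smul, reverse.map_one, reverse.map_mul, reverse_ι, hrev_e,
    eq_neg_of_add_eq_zero_right (e_one_anticomm_ι_normalVec _), sub_eq_add_neg]

lemma reverse_ψB_mul_ψB {f : (Fin 4 → ℝ) → ℝ} {h : Fin 6 → (Fin 4 → ℝ) → ℝ} {x : Fin 4 → ℝ}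
    (hx : f x ^ 2 + ∑ k, h k x ^ 2 = 1) :
    reverse (ψB f h x) * ψB f h x = 1 := by
  rw [reverse_ψB, ψB_eq]
  exact smul_one_sub_mul_mul_smul_one_add_mul e_one_mul_self (e_one_anticomm_ι_normalVec _)
    (ι_normalVec_mul_self_eq_one_sub_sq hx)

section Calculus

variable {E : Type*} [NormedAddCommGroup E] [NormedSpace ℝ E] {x : E}

lemma sq_mul_fderiv_div_apply {g f : E → ℝ} (hg : DifferentiableAt ℝ g x)
    (hf : DifferentiableAt ℝ f x) (hx : f x ≠ 0) (v : E) :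
    f x ^ 2 * fderiv ℝ (fun y => g y / f y) x v = f x * fderiv ℝ g x v - g x * fderiv ℝ f x v := by
  have hdiv := hg.hasFDerivAt.mul ((hasFDerivAt_inv hx).comp x hf.hasFDerivAt)
  rw [show (fun y => g y / f y) = g * (fun x => x⁻¹) ∘ f from funext fun y => div_eq_mul_inv _ _,
    hdiv.fderiv]
  simp
  field_simp
  ring

lemma mul_fderiv_add_sum_mul_fderiv_eq_zero {ι : Type*} [Fintype ι] {f : E → ℝ}
    {h : ι → E → ℝ} (hf : DifferentiableAt ℝ f x) (hh : ∀ k, DifferentiableAt ℝ (h k) x)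
    (hnorm : ∀ y, f y ^ 2 + ∑ k, h k y ^ 2 = 1) (v : E) :
    f x * fderiv ℝ f x v + ∑ k, h k x * fderiv ℝ (h k) x v = 0 := by
  have hD := (hf.hasFDerivAt.pow 2).fun_add
    (HasFDerivAt.fun_sum (u := Finset.univ) fun k _ => (hh k).hasFDerivAt.pow 2)
  rw [show (fun y => f y ^ 2 + ∑ k, h k y ^ 2) = fun _ => 1 from funext hnorm] at hD
  have h0 := congrArg (· v) (hD.unique (hasFDerivAt_const 1 x))
  simp only [add_apply, sum_apply, smul_apply, zero_apply, smul_eq_mul, nsmul_eq_mul,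
    Nat.cast_ofNat, pow_one, Nat.add_one_sub_one, mul_assoc, ← Finset.mul_sum] at h0
  linarith

lemma fderiv_smul_add_sum_smul_apply {F : Type*} [NormedAddCommGroup F] [NormedSpace ℝ F]
    {ι : Type*} [Fintype ι] {f : E → ℝ} {g : ι → E → ℝ} (hf : DifferentiableAt ℝ f x)
    (hg : ∀ k, DifferentiableAt ℝ (g k) x) (a : F) (b : ι → F) (v : E) :
    fderiv ℝ (fun y => f y • a + ∑ k, g k y • b k) x v =
      fderiv ℝ f x v • a + ∑ k, fderiv ℝ (g k) x v • b k := by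
  rw [((hf.hasFDerivAt.smul_const a).fun_add
      (HasFDerivAt.fun_sum (u := Finset.univ) fun k _ =>
        (hg k).hasFDerivAt.smul_const (b k))).fderiv]
  simp

end Calculus

section Derivatives

variable {f : (Fin 4 → ℝ) → ℝ} {h : Fin 6 → (Fin 4 → ℝ) → ℝ} {x : Fin 4 → ℝ}

lemma ι_normalVec_fderiv_anticomm (hf : DifferentiableAt ℝ f x)
    (hh : ∀ k, DifferentiableAt ℝ (h k) x) (hnorm : ∀ y, f y ^ 2 + ∑ k, h k y ^ 2 = 1)
    (v : Fin 4 → ℝ) :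
    ι Qm (normalVec fun k => fderiv ℝ (h k) x v) * ι Qm (normalVec fun k => h k x) +
        ι Qm (normalVec fun k => h k x) * ι Qm (normalVec fun k => fderiv ℝ (h k) x v) =
      algebraMap ℝ Cl (-(2 * f x * fderiv ℝ f x v)) := by
  have hconstr := mul_fderiv_add_sum_mul_fderiv_eq_zero hf hh hnorm v
  rw [ι_normalVec_anticomm]
  congr 1
  simp only [mul_comm (fderiv ℝ (h _) x v)]
  linarith

lemma HB_eq (hf : DifferentiableAt ℝ f x)
    (hh : ∀ k, DifferentiableAt ℝ (h k) x) (hx : f x ≠ 0) (α : Fin 4) (k : Fin 6) :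
    HB f h α k x = 2 * (f x * fderiv ℝ (h k) x (Pi.single α 1) -
      h k x * fderiv ℝ f x (Pi.single α 1)) := by
  rw [HB, mul_assoc, sq_mul_fderiv_div_apply (hh k) hf hx]

lemma AB_eq (hf : DifferentiableAt ℝ f x)
    (hh : ∀ k, DifferentiableAt ℝ (h k) x) (hx : f x ≠ 0) (α : Fin 4) (i j : Fin 6) :
    AB f h α i j x = 2 * (fderiv ℝ (h i) x (Pi.single α 1) * h j x -
      h i x * fderiv ℝ (h j) x (Pi.single α 1)) := by
  rw [AB, HB_eq hf hh hx α, HB_eq hf hh hx α]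
  field_simp
  ring

lemma sum_HB_smul (hf : DifferentiableAt ℝ f x)
    (hh : ∀ k, DifferentiableAt ℝ (h k) x) (hx : f x ≠ 0) (α : Fin 4) :
    ∑ k, HB f h α k x • (e 1 * e (nIdx k)) =
      (2 : ℝ) • (f x • (e 1 * ι Qm (normalVec fun k => fderiv ℝ (h k) x (Pi.single α 1))) -
        fderiv ℝ f x (Pi.single α 1) • (e 1 * ι Qm (normalVec fun k => h k x))) := by
  simp only [e_one_mul_ι_normalVec, Finset.smul_sum, ← Finset.sum_sub_distrib, smul_smul,
    ← sub_smul, HB_eq hf hh hx α]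
  congr! 2
  ring

lemma sum_AB_smul (hf : DifferentiableAt ℝ f x)
    (hh : ∀ k, DifferentiableAt ℝ (h k) x) (hx : f x ≠ 0) (α : Fin 4) :
    ∑ i, ∑ j, AB f h α i j x • (e (nIdx i) * e (nIdx j)) =
      (2 : ℝ) • (ι Qm (normalVec fun k => fderiv ℝ (h k) x (Pi.single α 1)) *
          ι Qm (normalVec fun k => h k x) -
        ι Qm (normalVec fun k => h k x) *
          ι Qm (normalVec fun k => fderiv ℝ (h k) x (Pi.single α 1))) := by
  simp only [ι_normalVec_mul_ι_normalVec, Finset.smul_sum, ← Finset.sum_sub_distrib, smul_smul,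
    ← sub_smul, AB_eq hf hh hx α]

end Derivatives

/-- Spin fields of the type `f + Σ_k f^{1k}e₁e_k` are normalized and solve the Killing
spin field equation with the stated extrinsic curvature and normal connection, and with
vanishing tangential connection coefficients. -/
theorem stmt_9 (nCl : AddGroupNorm Cl)
    (hns : ∀ (c : ℝ) (x : Cl), nCl (c • x) ≤ ‖c‖ * nCl x) :
    letI : NormedAddCommGroup Cl := nCl.toNormedAddCommGroup
    letI : NormedSpace ℝ Cl := { norm_smul_le := hns }
    ∀ (f : (Fin 4 → ℝ) → ℝ) (h : Fin 6 → (Fin 4 → ℝ) → ℝ),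
      Differentiable ℝ f →
      (∀ k, Differentiable ℝ (h k)) →
      (∀ x, f x ≠ 0) →
      (∀ x, (f x) ^ 2 + ∑ k : Fin 6, (h k x) ^ 2 = 1) →
      (∀ x, reverse (Q := Qm) (ψB f h x) * ψB f h x = 1) ∧
      Differentiable ℝ (ψB f h) ∧
      ∀ (α : Fin 4) (x : Fin 4 → ℝ),
        fderiv ℝ (ψB f h) x (Pi.single α 1) =
          ((1/2 : ℝ) • ∑ k : Fin 6, HB f h α k x • (e 1 * e (nIdx k))
            + (1/4 : ℝ) • ∑ i : Fin 6, ∑ j : Fin 6, AB f h α i j x • (e (nIdx i) * e (nIdx j)))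
            * ψB f h x := by
  intro f h hf hh hf0 hnorm
  let : NormedAddCommGroup Cl := nCl.toNormedAddCommGroup
  let : NormedSpace ℝ Cl := { norm_smul_le := hns }
  refine ⟨fun x => reverse_ψB_mul_ψB (hnorm x), by unfold ψB; fun_prop, fun α x => ?_⟩
  have hderiv : fderiv ℝ (ψB f h) x (Pi.single α 1) = fderiv ℝ f x (Pi.single α 1) • 1 +
      e 1 * ι Qm (normalVec fun k => fderiv ℝ (h k) x (Pi.single α 1)) := by
    rw [e_one_mul_ι_normalVec, ← fderiv_smul_add_sum_smul_apply (hf x) (fun k => hh k x)]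
    rfl
  rw [hderiv, sum_HB_smul (hf x) (fun k => hh k x) (hf0 x) α,
    sum_AB_smul (hf x) (fun k => hh k x) (hf0 x) α, ψB_eq,
    smul_one_add_mul_eq_mul_smul_one_add_mul e_one_mul_self (e_one_anticomm_ι_normalVec _)
      (e_one_anticomm_ι_normalVec _) (ι_normalVec_mul_self_eq_one_sub_sq (hnorm x))
      (ι_normalVec_fderiv_anticomm (hf x) (fun k => hh k x) hnorm _)]
  congr 1
  match_scalars <;> ring
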